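/- Soundness of consistent transitivity: let g₁, g₂, g₃ be gradual sensitivities with g₁ ⪅ g₂ and g₂ ⪅ g₃, and let ε₁, ε₂ be evidences (pairs of valid intervals) with ε₁ ⊑² I(g₁,g₂) and ε₂ ⊑² I(g₂,g₃). If the consistent transitivity ε₁ ∘ ε₂ is defined, then g₁ ⪅ g₃ holds (so I(g₁,g₃) is defined) and ε₁ ∘ ε₂ ⊑² I(g₁,g₃); that is, the combined evidence justifies the transitive consistent ordering judgment. -/

import Mathlib

/-- A gradual sensitivity: an interval `[lo, hi]` over the extended
nonnegative reals `[0,∞]`. -/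
structure Itv where
  lo : ENNReal
  hi : ENNReal

/-- A gradual sensitivity `[s₁,s₂]` is a valid interval when `s₁ ≤ s₂`. -/
def Itv.Valid (g : Itv) : Prop := g.lo ≤ g.hi

/-- Consistent sensitivity ordering: `[s₁,s₂] ⪅ [s₃,s₄]` iff `s₁ ≤ s₄`. -/
def Itv.cle (g₁ g₂ : Itv) : Prop := g₁.lo ≤ g₂.hi

/-- Precision (interval inclusion): `[s₁,s₂] ⊑ [s₃,s₄]` iff `s₃ ≤ s₁` and `s₂ ≤ s₄`. -/
def Itv.prec (g₁ g₂ : Itv) : Prop := g₂.lo ≤ g₁.lo ∧ g₁.hi ≤ g₂.hi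

/-- The unknown sensitivity `? = [0,∞]`. -/
noncomputable def Itv.unknown : Itv := ⟨0, ⊤⟩

open Classical in
/-- The interiorOp operator: I([s₁,s₂],[s₃,s₄]) = ⟨[s₁, s₂⊓s₄], [s₁⊔s₃, s₄]⟩,
defined when s₁ ≤ s₂⊓s₄ and s₁⊔s₃ ≤ s₄, undefined otherwise. -/
noncomputable def interiorOp (g₁ g₂ : Itv) : Option (Itv × Itv) :=
  if g₁.lo ≤ g₁.hi ⊓ g₂.hi ∧ g₁.lo ⊔ g₂.lo ≤ g₂.hi then
    some (⟨g₁.lo, g₁.hi ⊓ g₂.hi⟩, ⟨g₁.lo ⊔ g₂.lo, g₂.hi⟩)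
  else none

open Classical in
/-- The consistent transitivity operator on evidences:
⟨[s₁₁,s₁₂],[s₁₃,s₁₄]⟩ ∘ ⟨[s₂₁,s₂₂],[s₂₃,s₂₄]⟩ =
⟨[s₁₁, s₁₂⊓s₁₄⊓s₂₂], [s₁₃⊔s₂₁⊔s₂₃, s₂₄]⟩,
defined when s₁₁ ≤ s₁₂⊓s₁₄⊓s₂₂ and s₁₃⊔s₂₁⊔s₂₃ ≤ s₂₄, undefined otherwise. -/
noncomputable def ctrans (ε₁ ε₂ : Itv × Itv) : Option (Itv × Itv) :=
  if ε₁.1.lo ≤ ε₁.1.hi ⊓ ε₁.2.hi ⊓ ε₂.1.hi ∧ ε₁.2.lo ⊔ ε₂.1.lo ⊔ ε₂.2.lo ≤ ε₂.2.hi then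
    some (⟨ε₁.1.lo, ε₁.1.hi ⊓ ε₁.2.hi ⊓ ε₂.1.hi⟩, ⟨ε₁.2.lo ⊔ ε₂.1.lo ⊔ ε₂.2.lo, ε₂.2.hi⟩)
  else none

/-- Evidence precision ⊑² (componentwise precision). -/
def evPrec (ε ε' : Itv × Itv) : Prop := ε.1.prec ε'.1 ∧ ε.2.prec ε'.2

/-- An evidence is a pair of valid intervals. -/
def evValid (ε : Itv × Itv) : Prop := ε.1.Valid ∧ ε.2.Valid

/-!
Evidence below `I(g₁,g₂)` has its first interval inside `[g₁.lo, g₂.hi]`, so a valid first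
interval already forces `g₁ ⪅ g₂`. The first interval of `ε₁ ∘ ε₂` starts at `ε₁.1.lo ≥ g₁.lo`
and ends below `ε₂.1.hi ≤ g₃.hi`; its definedness makes it valid, which gives `g₁ ⪅ g₃`. The
precision bounds for `I(g₁,g₃)` are inherited from those for `I(g₁,g₂)` and `I(g₂,g₃)` since
`ε₁ ∘ ε₂` only shrinks upper ends by `⊓` and raises lower ends by `⊔`.
-/

/-- The evidence `I(g₁,g₂)` without its definedness side condition. -/
def interiorEv (g₁ g₂ : Itv) : Itv × Itv :=
  (⟨g₁.lo, g₁.hi ⊓ g₂.hi⟩, ⟨g₁.lo ⊔ g₂.lo, g₂.hi⟩)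

/-- The evidence `ε₁ ∘ ε₂` without its definedness side condition. -/
def ctransEv (ε₁ ε₂ : Itv × Itv) : Itv × Itv :=
  (⟨ε₁.1.lo, ε₁.1.hi ⊓ ε₁.2.hi ⊓ ε₂.1.hi⟩, ⟨ε₁.2.lo ⊔ ε₂.1.lo ⊔ ε₂.2.lo, ε₂.2.hi⟩)

theorem interiorOp_eq_some_iff {g₁ g₂ : Itv} {ι : Itv × Itv} :
    interiorOp g₁ g₂ = some ι ↔
      (g₁.lo ≤ g₁.hi ⊓ g₂.hi ∧ g₁.lo ⊔ g₂.lo ≤ g₂.hi) ∧ interiorEv g₁ g₂ = ι := by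
  simp only [interiorOp, interiorEv, Option.ite_none_right_eq_some, Option.some.injEq]

theorem interiorOp_eq_some_of_cle {g₁ g₂ : Itv} (hg₁ : g₁.Valid) (hg₂ : g₂.Valid)
    (h : g₁.cle g₂) : interiorOp g₁ g₂ = some (interiorEv g₁ g₂) :=
  interiorOp_eq_some_iff.2 ⟨⟨le_inf hg₁ h, sup_le h hg₂⟩, rfl⟩

theorem ctrans_eq_some_iff {ε₁ ε₂ ε : Itv × Itv} :
    ctrans ε₁ ε₂ = some ε ↔
      (ε₁.1.lo ≤ ε₁.1.hi ⊓ ε₁.2.hi ⊓ ε₂.1.hi ∧ ε₁.2.lo ⊔ ε₂.1.lo ⊔ ε₂.2.lo ≤ ε₂.2.hi) ∧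
        ctransEv ε₁ ε₂ = ε := by
  simp only [ctrans, ctransEv, Option.ite_none_right_eq_some, Option.some.injEq]

theorem evValid_of_ctrans_eq_some {ε₁ ε₂ ε : Itv × Itv} (h : ctrans ε₁ ε₂ = some ε) :
    evValid ε := by
  obtain ⟨hdef, rfl⟩ := ctrans_eq_some_iff.1 h
  exact hdef

theorem evPrec_interiorEv_iff {ε : Itv × Itv} {g₁ g₂ : Itv} :
    evPrec ε (interiorEv g₁ g₂) ↔
      ε.1.prec g₁ ∧ ε.2.prec g₂ ∧ ε.1.hi ≤ g₂.hi ∧ g₁.lo ≤ ε.2.lo := by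
  simp only [evPrec, Itv.prec, interiorEv, le_inf_iff, sup_le_iff]
  tauto

theorem cle_of_evPrec_interiorEv {ε : Itv × Itv} {g₁ g₂ : Itv} (hε : ε.1.Valid)
    (h : evPrec ε (interiorEv g₁ g₂)) : g₁.cle g₂ :=
  have ⟨⟨hlo, _⟩, _, hhi, _⟩ := evPrec_interiorEv_iff.1 h
  hlo.trans (hε.trans hhi)

theorem evPrec_ctransEv {ε₁ ε₂ : Itv × Itv} {g₁ g₂ g₃ : Itv}
    (h₁ : evPrec ε₁ (interiorEv g₁ g₂)) (h₂ : evPrec ε₂ (interiorEv g₂ g₃)) :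
    evPrec (ctransEv ε₁ ε₂) (interiorEv g₁ g₃) := by
  obtain ⟨⟨hlo₁, hhi₁⟩, -, -, hlo₁₂⟩ := evPrec_interiorEv_iff.1 h₁
  obtain ⟨-, ⟨hlo₃, hhi₃⟩, hhi₂₃, -⟩ := evPrec_interiorEv_iff.1 h₂
  refine evPrec_interiorEv_iff.2 ⟨⟨hlo₁, ?_⟩, ⟨?_, hhi₃⟩, ?_, ?_⟩
  · exact inf_le_left.trans (inf_le_left.trans hhi₁)
  · exact hlo₃.trans le_sup_right
  · exact inf_le_right.trans hhi₂₃
  · exact hlo₁₂.trans (le_sup_left.trans le_sup_left)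

theorem ctrans_sound_general (g₁ g₂ g₃ : Itv)
    (hg₁ : g₁.Valid) (hg₃ : g₃.Valid)
    (ε₁ ε₂ : Itv × Itv)
    (ι₁₂ ι₂₃ : Itv × Itv)
    (hi₁ : interiorOp g₁ g₂ = some ι₁₂) (hp₁ : evPrec ε₁ ι₁₂)
    (hi₂ : interiorOp g₂ g₃ = some ι₂₃) (hp₂ : evPrec ε₂ ι₂₃)
    (ε : Itv × Itv) (hc : ctrans ε₁ ε₂ = some ε) :
    g₁.cle g₃ ∧ ∃ ι₁₃, interiorOp g₁ g₃ = some ι₁₃ ∧ evPrec ε ι₁₃ := by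
  obtain ⟨-, rfl⟩ := interiorOp_eq_some_iff.1 hi₁
  obtain ⟨-, rfl⟩ := interiorOp_eq_some_iff.1 hi₂
  have hvalid := evValid_of_ctrans_eq_some hc
  obtain ⟨-, rfl⟩ := ctrans_eq_some_iff.1 hc
  have hprec := evPrec_ctransEv hp₁ hp₂
  have h₁₃ := cle_of_evPrec_interiorEv hvalid.1 hprec
  exact ⟨h₁₃, _, interiorOp_eq_some_of_cle hg₁ hg₃ h₁₃, hprec⟩

/-- Soundness of consistent transitivity: if ε₁ justifies g₁ ⪅ g₂ and ε₂ justifies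
g₂ ⪅ g₃ (each at least as precise as the corresponding interiorOp), and ε₁ ∘ ε₂ is
defined, then g₁ ⪅ g₃ (so I(g₁,g₃) is defined) and ε₁ ∘ ε₂ ⊑² I(g₁,g₃). -/
theorem ctrans_sound (g₁ g₂ g₃ : Itv)
    (hg₁ : g₁.Valid) (hg₂ : g₂.Valid) (hg₃ : g₃.Valid)
    (h₁₂ : g₁.cle g₂) (h₂₃ : g₂.cle g₃)
    (ε₁ ε₂ : Itv × Itv) (hv₁ : evValid ε₁) (hv₂ : evValid ε₂)
    (ι₁₂ ι₂₃ : Itv × Itv)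
    (hi₁ : interiorOp g₁ g₂ = some ι₁₂) (hp₁ : evPrec ε₁ ι₁₂)
    (hi₂ : interiorOp g₂ g₃ = some ι₂₃) (hp₂ : evPrec ε₂ ι₂₃)
    (ε : Itv × Itv) (hc : ctrans ε₁ ε₂ = some ε) :
    g₁.cle g₃ ∧ ∃ ι₁₃, interiorOp g₁ g₃ = some ι₁₃ ∧ evPrec ε ι₁₃ :=
  ctrans_sound_general g₁ g₂ g₃ hg₁ hg₃ ε₁ ε₂ ι₁₂ ι₂₃ hi₁ hp₁ hi₂ hp₂ ε hc
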